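/- Let S be a semigroup of type (D) graded by a degree function, q_c,q_s ∈ K, and Δ : K⟨S⟩ → K⟨S⟩ ⊗_χ K⟨S⟩ the algebra morphism (for the χ-coloured tensor product, χ the q_c-bicharacter) defined on letters s ∈ S by Δ(s) = s⊗1 + 1⊗s + Σ_{rt=s} q_s^{|r|_d|t|_d} r⊗t. Then Δ is coassociative: (Δ ⊗ Id)∘Δ = (Id ⊗ Δ)∘Δ. -/

import Mathlib

open Finsupp

variable {S K : Type*}

/-- Degree of a word over `S`: sum of degrees of its letters. -/
def degw (deg : S → ℕ) (w : List S) : ℕ := (w.map deg).sum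

/-- The multiplication of the `χ`-coloured tensor product `K⟨S⟩ ⊗_χ K⟨S⟩`
(identified with `K[S* × S*]`), with `χ(v₁,u₂) = q_c^{|v₁|·|u₂|}`:
`(u₁ ⊗ v₁)(u₂ ⊗ v₂) = χ(v₁,u₂) (u₁u₂ ⊗ v₁v₂)`. -/
noncomputable def cmul [CommRing K] (deg : S → ℕ) (qc : K)
    (f g : List S × List S →₀ K) : List S × List S →₀ K :=
  f.sum fun p a => g.sum fun p' b =>
    Finsupp.single (p.1 ++ p'.1, p.2 ++ p'.2) (a * b * qc ^ (degw deg p.2 * degw deg p'.1))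

/-- The value of `Δ` on a letter `s ∈ S`:
`Δ(s) = s ⊗ 1 + 1 ⊗ s + Σ_{rt=s} q_s^{|r||t|} r ⊗ t`. -/
noncomputable def deltaLetter [CommRing K] (deg : S → ℕ) (qs : K) [Mul S]
    (hfin : ∀ z : S, {p : S × S | p.1 * p.2 = z}.Finite) (s : S) : List S × List S →₀ K :=
  Finsupp.single ([s], ([] : List S)) 1 + Finsupp.single (([] : List S), [s]) 1 +
    (hfin s).toFinset.sum fun p =>
      Finsupp.single ([p.1], [p.2]) (qs ^ (deg p.1 * deg p.2))

/-- `Δ : K⟨S⟩ → K⟨S⟩ ⊗_χ K⟨S⟩`, the unique morphism of algebras into the coloured tensor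
product determined by `deltaLetter` on the letters; here its value on a basis word. -/
noncomputable def deltaWord [CommRing K] (deg : S → ℕ) (qc qs : K) [Mul S]
    (hfin : ∀ z : S, {p : S × S | p.1 * p.2 = z}.Finite) : List S → (List S × List S →₀ K)
  | [] => Finsupp.single (([] : List S), ([] : List S)) 1
  | s :: w => cmul deg qc (deltaLetter deg qs hfin s) (deltaWord deg qc qs hfin w)

/-- `Δ ⊗ Id` on `K[S* × S*]`, with values in `K[S* × S* × S*]`. -/
noncomputable def deltaTensorId [CommRing K] (deg : S → ℕ) (qc qs : K) [Mul S]
    (hfin : ∀ z : S, {p : S × S | p.1 * p.2 = z}.Finite)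
    (f : List S × List S →₀ K) : List S × List S × List S →₀ K :=
  f.sum fun p a =>
    a • Finsupp.mapDomain (fun q : List S × List S => (q.1, q.2, p.2))
      (deltaWord deg qc qs hfin p.1)

/-- `Id ⊗ Δ` on `K[S* × S*]`, with values in `K[S* × S* × S*]`. -/
noncomputable def idTensorDelta [CommRing K] (deg : S → ℕ) (qc qs : K) [Mul S]
    (hfin : ∀ z : S, {p : S × S | p.1 * p.2 = z}.Finite)
    (f : List S × List S →₀ K) : List S × List S × List S →₀ K :=
  f.sum fun p a =>
    a • Finsupp.mapDomain (fun q : List S × List S => (p.1, q.1, q.2))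
      (deltaWord deg qc qs hfin p.2)

section Basic
variable [CommRing K] (deg : S → ℕ) (qc : K)

@[simp] lemma degw_nil : degw deg ([] : List S) = 0 := rfl
@[simp] lemma degw_singleton (s : S) : degw deg [s] = deg s := by simp [degw]
lemma degw_append (u v : List S) : degw deg (u ++ v) = degw deg u + degw deg v := by
  simp [degw]

lemma cmul_single_single (p p' : List S × List S) (a b : K) :
    cmul deg qc (Finsupp.single p a) (Finsupp.single p' b) =
      Finsupp.single (p.1 ++ p'.1, p.2 ++ p'.2) (a * b * qc ^ (degw deg p.2 * degw deg p'.1)) := by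
  unfold cmul
  rw [Finsupp.sum_single_index, Finsupp.sum_single_index]
  · simp
  · simp

@[simp] lemma cmul_zero_left (g) : cmul (K := K) deg qc 0 g = 0 := by simp [cmul]
@[simp] lemma cmul_zero_right (f) : cmul (K := K) deg qc f 0 = 0 := by simp [cmul]

lemma cmul_add_left (f₁ f₂ g) :
    cmul (K := K) deg qc (f₁ + f₂) g = cmul deg qc f₁ g + cmul deg qc f₂ g := by
  unfold cmul
  rw [Finsupp.sum_add_index'] <;> simp [add_mul, Finsupp.sum_add]

lemma cmul_add_right (f g₁ g₂) :
    cmul (K := K) deg qc f (g₁ + g₂) = cmul deg qc f g₁ + cmul deg qc f g₂ := by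
  unfold cmul
  rw [← Finsupp.sum_add]
  refine Finsupp.sum_congr fun p _ => ?_
  rw [Finsupp.sum_add_index'] <;> simp [mul_add, add_mul]

lemma cmul_single_one_left (g) :
    cmul (K := K) deg qc (Finsupp.single (([] : List S), ([] : List S)) 1) g = g := by
  unfold cmul
  rw [Finsupp.sum_single_index]
  · simpa using Finsupp.sum_single g
  · simp

lemma cmul_single_one_right (f) :
    cmul (K := K) deg qc f (Finsupp.single (([] : List S), ([] : List S)) 1) = f := by
  unfold cmul
  conv_rhs => rw [← Finsupp.sum_single f]
  refine Finsupp.sum_congr fun p _ => ?_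
  rw [Finsupp.sum_single_index] <;> simp

lemma cmul_assoc (f g h) :
    cmul (K := K) deg qc (cmul deg qc f g) h = cmul deg qc f (cmul deg qc g h) := by
  induction f using Finsupp.induction_linear with
  | zero => simp
  | add f₁ f₂ h₁ h₂ => simp [cmul_add_left, h₁, h₂]
  | single p a =>
    induction g using Finsupp.induction_linear with
    | zero => simp
    | add g₁ g₂ h₁ h₂ => simp [cmul_add_left, cmul_add_right, h₁, h₂]
    | single p' b =>
      induction h using Finsupp.induction_linear with
      | zero => simp
      | add h₁ h₂ ih₁ ih₂ => simp [cmul_add_right, ih₁, ih₂]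
      | single p'' c =>
        simp only [cmul_single_single, degw_append]
        rw [Finsupp.single_eq_single_iff]
        left
        constructor
        · simp [List.append_assoc]
        · ring

end Basic
noncomputable def cmul3 [CommRing K] (deg : S → ℕ) (qc : K)
    (f g : List S × List S × List S →₀ K) : List S × List S × List S →₀ K :=
  f.sum fun p a => g.sum fun p' b =>
    Finsupp.single (p.1 ++ p'.1, p.2.1 ++ p'.2.1, p.2.2 ++ p'.2.2)
      (a * b * qc ^ ((degw deg p.2.1 + degw deg p.2.2) * degw deg p'.1 +
        degw deg p.2.2 * degw deg p'.2.1))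

section C3
variable [CommRing K] (deg : S → ℕ) (qc : K)

lemma cmul3_single_single (p p' : List S × List S × List S) (a b : K) :
    cmul3 deg qc (Finsupp.single p a) (Finsupp.single p' b) =
      Finsupp.single (p.1 ++ p'.1, p.2.1 ++ p'.2.1, p.2.2 ++ p'.2.2)
        (a * b * qc ^ ((degw deg p.2.1 + degw deg p.2.2) * degw deg p'.1 +
          degw deg p.2.2 * degw deg p'.2.1)) := by
  unfold cmul3
  rw [Finsupp.sum_single_index, Finsupp.sum_single_index] <;> simp

@[simp] lemma cmul3_zero_left (g) : cmul3 (K := K) deg qc 0 g = 0 := by simp [cmul3]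
@[simp] lemma cmul3_zero_right (f) : cmul3 (K := K) deg qc f 0 = 0 := by simp [cmul3]

lemma cmul3_add_left (f₁ f₂ g) :
    cmul3 (K := K) deg qc (f₁ + f₂) g = cmul3 deg qc f₁ g + cmul3 deg qc f₂ g := by
  unfold cmul3
  rw [Finsupp.sum_add_index'] <;> simp [add_mul, Finsupp.sum_add]

lemma cmul3_add_right (f g₁ g₂) :
    cmul3 (K := K) deg qc f (g₁ + g₂) = cmul3 deg qc f g₁ + cmul3 deg qc f g₂ := by
  unfold cmul3
  rw [← Finsupp.sum_add]
  refine Finsupp.sum_congr fun p _ => ?_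
  rw [Finsupp.sum_add_index'] <;> simp [mul_add, add_mul]

lemma cmul3_smul_left (c : K) (f g) :
    cmul3 (K := K) deg qc (c • f) g = c • cmul3 deg qc f g := by
  unfold cmul3
  rw [Finsupp.sum_smul_index, Finsupp.smul_sum]
  · refine Finsupp.sum_congr fun p _ => ?_
    rw [Finsupp.smul_sum]
    refine Finsupp.sum_congr fun p' _ => ?_
    rw [Finsupp.smul_single, smul_eq_mul]
    ring_nf
  · simp

lemma cmul3_smul_right (c : K) (f g) :
    cmul3 (K := K) deg qc f (c • g) = c • cmul3 deg qc f g := by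
  unfold cmul3
  rw [Finsupp.smul_sum]
  refine Finsupp.sum_congr fun p _ => ?_
  rw [Finsupp.sum_smul_index, Finsupp.smul_sum]
  · refine Finsupp.sum_congr fun p' _ => ?_
    rw [Finsupp.smul_single, smul_eq_mul]
    ring_nf
  · simp

end C3
section Delta
variable [CommRing K] [Semigroup S] (deg : S → ℕ) (qc qs : K)
  (hfin : ∀ z : S, {p : S × S | p.1 * p.2 = z}.Finite)

lemma deltaWord_singleton (s : S) :
    deltaWord deg qc qs hfin [s] = deltaLetter deg qs hfin s := by
  show cmul deg qc _ _ = _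
  rw [show deltaWord deg qc qs hfin [] = Finsupp.single (([] : List S), ([] : List S)) 1 from rfl,
    cmul_single_one_right]

lemma deltaWord_append (u v : List S) :
    deltaWord deg qc qs hfin (u ++ v) =
      cmul deg qc (deltaWord deg qc qs hfin u) (deltaWord deg qc qs hfin v) := by
  induction u with
  | nil =>
    rw [List.nil_append]
    conv_rhs => rw [show deltaWord deg qc qs hfin [] =
      Finsupp.single (([] : List S), ([] : List S)) 1 from rfl, cmul_single_one_left]
  | cons s u ih =>
    show cmul deg qc _ (deltaWord deg qc qs hfin (u ++ v)) = _
    rw [ih, ← cmul_assoc]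
    rfl

lemma support_cmul (f g : List S × List S →₀ K) (P : List S × List S)
    (hP : P ∈ (cmul deg qc f g).support) :
    ∃ p ∈ f.support, ∃ p' ∈ g.support, P = (p.1 ++ p'.1, p.2 ++ p'.2) := by
  classical
  have h1 := Finsupp.support_sum hP
  rw [Finset.mem_biUnion] at h1
  obtain ⟨p, hp, h2⟩ := h1
  have h3 := Finsupp.support_sum h2
  rw [Finset.mem_biUnion] at h3
  obtain ⟨p', hp', h4⟩ := h3
  have := Finsupp.support_single_subset h4
  rw [Finset.mem_singleton] at this
  exact ⟨p, hp, p', hp', this⟩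

lemma deltaLetter_support_deg (hdeg : ∀ x y : S, deg (x * y) = deg x + deg y) (s : S)
    (p : List S × List S) (hp : p ∈ (deltaLetter deg qs hfin s).support) :
    degw deg p.1 + degw deg p.2 = deg s := by
  classical
  unfold deltaLetter at hp
  have h1 := Finsupp.support_add hp
  rw [Finset.mem_union] at h1
  rcases h1 with h1 | h1
  · have h2 := Finsupp.support_add h1
    rw [Finset.mem_union] at h2
    rcases h2 with h2 | h2 <;>
    · have := Finsupp.support_single_subset h2
      rw [Finset.mem_singleton] at this
      subst this; simp
  · have h2 := Finsupp.support_finset_sum h1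
    rw [Finset.mem_biUnion] at h2
    obtain ⟨q, hq, h3⟩ := h2
    have := Finsupp.support_single_subset h3
    rw [Finset.mem_singleton] at this
    subst this
    rw [Set.Finite.mem_toFinset] at hq
    simp only [Set.mem_setOf_eq] at hq
    simp [← hdeg, hq]

lemma deltaWord_support_deg (hdeg : ∀ x y : S, deg (x * y) = deg x + deg y) (w : List S)
    (p : List S × List S) (hp : p ∈ (deltaWord deg qc qs hfin w).support) :
    degw deg p.1 + degw deg p.2 = degw deg w := by
  induction w generalizing p with
  | nil =>
    have := Finsupp.support_single_subset hp
    rw [Finset.mem_singleton] at this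
    subst this; simp
  | cons s w ih =>
    obtain ⟨q, hq, q', hq', rfl⟩ := support_cmul deg qc _ _ p hp
    have h1 := deltaLetter_support_deg deg qs hfin hdeg s q hq
    have h2 := ih q' hq'
    show degw deg (q.1 ++ q'.1) + degw deg (q.2 ++ q'.2) = degw deg (s :: w)
    have : degw deg (s :: w) = deg s + degw deg w := by simp [degw]
    rw [this, degw_append, degw_append]
    omega

lemma dti_single (p : List S × List S) (a : K) :
    deltaTensorId deg qc qs hfin (Finsupp.single p a) =
      a • Finsupp.mapDomain (fun q : List S × List S => (q.1, q.2, p.2))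
        (deltaWord deg qc qs hfin p.1) := by
  unfold deltaTensorId
  rw [Finsupp.sum_single_index]
  simp

lemma dti_add (f g) :
    deltaTensorId (K := K) deg qc qs hfin (f + g) =
      deltaTensorId deg qc qs hfin f + deltaTensorId deg qc qs hfin g := by
  unfold deltaTensorId
  rw [Finsupp.sum_add_index'] <;> simp [add_smul]

lemma itd_single (p : List S × List S) (a : K) :
    idTensorDelta deg qc qs hfin (Finsupp.single p a) =
      a • Finsupp.mapDomain (fun q : List S × List S => (p.1, q.1, q.2))
        (deltaWord deg qc qs hfin p.2) := by
  unfold idTensorDelta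
  rw [Finsupp.sum_single_index]
  simp

lemma itd_add (f g) :
    idTensorDelta (K := K) deg qc qs hfin (f + g) =
      idTensorDelta deg qc qs hfin f + idTensorDelta deg qc qs hfin g := by
  unfold idTensorDelta
  rw [Finsupp.sum_add_index'] <;> simp [add_smul]

@[simp] lemma dti_zero : deltaTensorId (K := K) deg qc qs hfin 0 = 0 := by
  simp [deltaTensorId]

@[simp] lemma itd_zero : idTensorDelta (K := K) deg qc qs hfin 0 = 0 := by
  simp [idTensorDelta]

end Delta
section Morph
variable [CommRing K] [Semigroup S] (deg : S → ℕ) (qc qs : K)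
  (hfin : ∀ z : S, {p : S × S | p.1 * p.2 = z}.Finite)
  (hdeg : ∀ x y : S, deg (x * y) = deg x + deg y)

include hdeg

lemma key_dti (u v x2 y2 : List S) :
    cmul3 deg qc
        (Finsupp.mapDomain (fun q : List S × List S => (q.1, q.2, x2))
          (deltaWord deg qc qs hfin u))
        (Finsupp.mapDomain (fun q : List S × List S => (q.1, q.2, y2))
          (deltaWord deg qc qs hfin v)) =
      qc ^ (degw deg x2 * degw deg v) •
        Finsupp.mapDomain (fun q : List S × List S => (q.1, q.2, x2 ++ y2))
          (cmul deg qc (deltaWord deg qc qs hfin u) (deltaWord deg qc qs hfin v)) := by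
  unfold cmul3 cmul
  rw [Finsupp.sum_mapDomain_index (by simp) (by simp [add_mul, Finsupp.sum_add])]
  rw [Finsupp.mapDomain_sum, Finsupp.smul_sum]
  refine Finsupp.sum_congr fun p hp => ?_
  rw [Finsupp.sum_mapDomain_index (by simp) (by intros; simp [mul_add, add_mul, Finsupp.single_add])]
  rw [Finsupp.mapDomain_sum, Finsupp.smul_sum]
  refine Finsupp.sum_congr fun p' hp' => ?_
  rw [Finsupp.mapDomain_single, Finsupp.smul_single, smul_eq_mul]
  have hv := deltaWord_support_deg deg qc qs hfin hdeg v p' hp'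
  congr 1
  rw [← hv]
  ring

lemma key_itd (u v x1 y1 : List S) :
    cmul3 deg qc
        (Finsupp.mapDomain (fun q : List S × List S => (x1, q.1, q.2))
          (deltaWord deg qc qs hfin u))
        (Finsupp.mapDomain (fun q : List S × List S => (y1, q.1, q.2))
          (deltaWord deg qc qs hfin v)) =
      qc ^ (degw deg u * degw deg y1) •
        Finsupp.mapDomain (fun q : List S × List S => (x1 ++ y1, q.1, q.2))
          (cmul deg qc (deltaWord deg qc qs hfin u) (deltaWord deg qc qs hfin v)) := by
  unfold cmul3 cmul
  rw [Finsupp.sum_mapDomain_index (by simp) (by simp [add_mul, Finsupp.sum_add])]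
  rw [Finsupp.mapDomain_sum, Finsupp.smul_sum]
  refine Finsupp.sum_congr fun p hp => ?_
  rw [Finsupp.sum_mapDomain_index (by simp) (by intros; simp [mul_add, add_mul, Finsupp.single_add])]
  rw [Finsupp.mapDomain_sum, Finsupp.smul_sum]
  refine Finsupp.sum_congr fun p' hp' => ?_
  rw [Finsupp.mapDomain_single, Finsupp.smul_single, smul_eq_mul]
  have hu := deltaWord_support_deg deg qc qs hfin hdeg u p hp
  congr 1
  rw [← hu]
  ring

lemma dti_cmul (f g : List S × List S →₀ K) :
    deltaTensorId deg qc qs hfin (cmul deg qc f g) =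
      cmul3 deg qc (deltaTensorId deg qc qs hfin f) (deltaTensorId deg qc qs hfin g) := by
  induction f using Finsupp.induction_linear with
  | zero => simp
  | add f₁ f₂ h₁ h₂ => simp [cmul_add_left, dti_add, cmul3_add_left, h₁, h₂]
  | single p a =>
    induction g using Finsupp.induction_linear with
    | zero => simp
    | add g₁ g₂ h₁ h₂ => simp [cmul_add_right, dti_add, cmul3_add_right, h₁, h₂]
    | single p' b =>
      rw [cmul_single_single, dti_single, dti_single, dti_single,
        cmul3_smul_left, cmul3_smul_right, key_dti deg qc qs hfin hdeg,
        ← deltaWord_append, smul_smul, smul_smul, mul_assoc]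

lemma itd_cmul (f g : List S × List S →₀ K) :
    idTensorDelta deg qc qs hfin (cmul deg qc f g) =
      cmul3 deg qc (idTensorDelta deg qc qs hfin f) (idTensorDelta deg qc qs hfin g) := by
  induction f using Finsupp.induction_linear with
  | zero => simp
  | add f₁ f₂ h₁ h₂ => simp [cmul_add_left, itd_add, cmul3_add_left, h₁, h₂]
  | single p a =>
    induction g using Finsupp.induction_linear with
    | zero => simp
    | add g₁ g₂ h₁ h₂ => simp [cmul_add_right, itd_add, cmul3_add_right, h₁, h₂]
    | single p' b =>
      rw [cmul_single_single, itd_single, itd_single, itd_single,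
        cmul3_smul_left, cmul3_smul_right, key_itd deg qc qs hfin hdeg,
        ← deltaWord_append, smul_smul, smul_smul, mul_assoc]

end Morph
section Base
variable [CommRing K] [Semigroup S] (deg : S → ℕ) (qc qs : K)
  (hfin : ∀ z : S, {p : S × S | p.1 * p.2 = z}.Finite)

lemma dti_finset_sum {ι : Type*} (t : Finset ι) (F : ι → (List S × List S →₀ K)) :
    deltaTensorId deg qc qs hfin (t.sum F) =
      t.sum fun i => deltaTensorId deg qc qs hfin (F i) :=
  map_sum (AddMonoidHom.mk' (deltaTensorId deg qc qs hfin) (dti_add deg qc qs hfin)) F t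

lemma itd_finset_sum {ι : Type*} (t : Finset ι) (F : ι → (List S × List S →₀ K)) :
    idTensorDelta deg qc qs hfin (t.sum F) =
      t.sum fun i => idTensorDelta deg qc qs hfin (F i) :=
  map_sum (AddMonoidHom.mk' (idTensorDelta deg qc qs hfin) (itd_add deg qc qs hfin)) F t

lemma mapD3r (v : List S) (s : S) :
    Finsupp.mapDomain (fun q : List S × List S => (q.1, q.2, v))
        (deltaLetter deg qs hfin s) =
      Finsupp.single ([s], ([] : List S), v) 1 + Finsupp.single (([] : List S), [s], v) 1 +
        (hfin s).toFinset.sum fun p =>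
          Finsupp.single ([p.1], [p.2], v) (qs ^ (deg p.1 * deg p.2)) := by
  unfold deltaLetter
  rw [Finsupp.mapDomain_add, Finsupp.mapDomain_add, Finsupp.mapDomain_finset_sum]
  simp [Finsupp.mapDomain_single]

lemma mapD3l (v : List S) (s : S) :
    Finsupp.mapDomain (fun q : List S × List S => (v, q.1, q.2))
        (deltaLetter deg qs hfin s) =
      Finsupp.single (v, [s], ([] : List S)) 1 + Finsupp.single (v, ([] : List S), [s]) 1 +
        (hfin s).toFinset.sum fun p =>
          Finsupp.single (v, [p.1], [p.2]) (qs ^ (deg p.1 * deg p.2)) := by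
  unfold deltaLetter
  rw [Finsupp.mapDomain_add, Finsupp.mapDomain_add, Finsupp.mapDomain_finset_sum]
  simp [Finsupp.mapDomain_single]

lemma doublesum (hdeg : ∀ x y : S, deg (x * y) = deg x + deg y) (s : S) :
    ((hfin s).toFinset.sum fun p => (hfin p.1).toFinset.sum fun q =>
        Finsupp.single (([q.1], [q.2], [p.2]) : List S × List S × List S)
          (qs ^ (deg p.1 * deg p.2) * qs ^ (deg q.1 * deg q.2))) =
      ((hfin s).toFinset.sum fun p => (hfin p.2).toFinset.sum fun q =>
        Finsupp.single (([p.1], [q.1], [q.2]) : List S × List S × List S)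
          (qs ^ (deg p.1 * deg p.2) * qs ^ (deg q.1 * deg q.2))) := by
  rw [Finset.sum_sigma', Finset.sum_sigma']
  refine Finset.sum_nbij' (fun x => ⟨(x.2.1, x.2.2 * x.1.2), (x.2.2, x.1.2)⟩)
    (fun x => ⟨(x.1.1 * x.2.1, x.2.2), (x.1.1, x.2.1)⟩) ?_ ?_ ?_ ?_ ?_
  · rintro ⟨p, q⟩ h
    rw [Finset.mem_sigma, Set.Finite.mem_toFinset, Set.Finite.mem_toFinset] at h
    simp only [Set.mem_setOf_eq] at h
    rw [Finset.mem_sigma, Set.Finite.mem_toFinset, Set.Finite.mem_toFinset]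
    simp only [Set.mem_setOf_eq]
    exact ⟨by rw [← mul_assoc, h.2, h.1], trivial⟩
  · rintro ⟨p, q⟩ h
    rw [Finset.mem_sigma, Set.Finite.mem_toFinset, Set.Finite.mem_toFinset] at h
    simp only [Set.mem_setOf_eq] at h
    rw [Finset.mem_sigma, Set.Finite.mem_toFinset, Set.Finite.mem_toFinset]
    simp only [Set.mem_setOf_eq]
    exact ⟨by rw [mul_assoc, h.2, h.1], trivial⟩
  · rintro ⟨p, q⟩ h
    rw [Finset.mem_sigma, Set.Finite.mem_toFinset, Set.Finite.mem_toFinset] at h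
    simp only [Set.mem_setOf_eq] at h
    obtain ⟨h1, h2⟩ := h
    simp only
    congr 1 <;> simp [h2]
  · rintro ⟨p, q⟩ h
    rw [Finset.mem_sigma, Set.Finite.mem_toFinset, Set.Finite.mem_toFinset] at h
    simp only [Set.mem_setOf_eq] at h
    obtain ⟨h1, h2⟩ := h
    simp only
    congr 1 <;> simp [h2]
  · rintro ⟨p, q⟩ h
    rw [Finset.mem_sigma, Set.Finite.mem_toFinset, Set.Finite.mem_toFinset] at h
    simp only [Set.mem_setOf_eq] at h
    obtain ⟨h1, h2⟩ := h
    simp only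
    congr 1
    rw [← pow_add, ← pow_add, hdeg, ← h2, hdeg]
    congr 1
    ring

lemma letter_coassoc (hdeg : ∀ x y : S, deg (x * y) = deg x + deg y) (s : S) :
    deltaTensorId deg qc qs hfin (deltaLetter deg qs hfin s) =
      idTensorDelta deg qc qs hfin (deltaLetter deg qs hfin s) := by
  conv_lhs => rw [deltaLetter]
  conv_rhs => rw [deltaLetter]
  rw [dti_add, dti_add, itd_add, itd_add, dti_finset_sum, itd_finset_sum,
    dti_single, dti_single, itd_single, itd_single]
  simp only [deltaWord_singleton, one_smul]
  rw [show deltaWord deg qc qs hfin [] = Finsupp.single (([] : List S), ([] : List S)) 1 from rfl]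
  rw [Finsupp.mapDomain_single, Finsupp.mapDomain_single, mapD3r, mapD3l]
  have hL : ∀ p : S × S,
      deltaTensorId deg qc qs hfin (Finsupp.single (([p.1], [p.2]) : List S × List S)
        (qs ^ (deg p.1 * deg p.2))) =
      qs ^ (deg p.1 * deg p.2) •
        (Finsupp.single ([p.1], ([] : List S), [p.2]) 1 +
          Finsupp.single (([] : List S), [p.1], [p.2]) 1 +
          (hfin p.1).toFinset.sum fun q =>
            Finsupp.single ([q.1], [q.2], [p.2]) (qs ^ (deg q.1 * deg q.2))) := by
    intro p
    rw [dti_single]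
    simp only [deltaWord_singleton]
    rw [mapD3r]
  have hR : ∀ p : S × S,
      idTensorDelta deg qc qs hfin (Finsupp.single (([p.1], [p.2]) : List S × List S)
        (qs ^ (deg p.1 * deg p.2))) =
      qs ^ (deg p.1 * deg p.2) •
        (Finsupp.single ([p.1], [p.2], ([] : List S)) 1 +
          Finsupp.single ([p.1], ([] : List S), [p.2]) 1 +
          (hfin p.2).toFinset.sum fun q =>
            Finsupp.single ([p.1], [q.1], [q.2]) (qs ^ (deg q.1 * deg q.2))) := by
    intro p
    rw [itd_single]
    simp only [deltaWord_singleton]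
    rw [mapD3l]
  simp only [hL, hR, smul_add, Finset.smul_sum, Finsupp.smul_single, smul_eq_mul, mul_one,
    Finset.sum_add_distrib]
  rw [doublesum deg qs hfin hdeg s]
  abel

end Base

/-- for a semigroup `S` of type (D) graded by a degree function, the
morphism of algebras `Δ : K⟨S⟩ → K⟨S⟩ ⊗_χ K⟨S⟩` with
`Δ(s) = s⊗1 + 1⊗s + Σ_{rt=s} q_s^{|r||t|} r⊗t` is coassociative. -/
theorem deltaWord_coassoc [CommRing K] [Semigroup S] (deg : S → ℕ)
    (hdeg : ∀ x y : S, deg (x * y) = deg x + deg y) (qc qs : K)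
    (hfin : ∀ z : S, {p : S × S | p.1 * p.2 = z}.Finite) :
    ∀ w : List S,
      deltaTensorId deg qc qs hfin (deltaWord deg qc qs hfin w) =
        idTensorDelta deg qc qs hfin (deltaWord deg qc qs hfin w) := by
  intro w
  induction w with
  | nil =>
    rw [show deltaWord deg qc qs hfin [] = Finsupp.single (([] : List S), ([] : List S)) 1 from rfl,
      dti_single, itd_single]
    simp only [one_smul]
    rw [show deltaWord deg qc qs hfin [] = Finsupp.single (([] : List S), ([] : List S)) 1 from rfl,
      Finsupp.mapDomain_single, Finsupp.mapDomain_single]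
  | cons s w ih =>
    show deltaTensorId deg qc qs hfin (cmul deg qc (deltaLetter deg qs hfin s)
        (deltaWord deg qc qs hfin w)) = idTensorDelta deg qc qs hfin (cmul deg qc _ _)
    rw [dti_cmul deg qc qs hfin hdeg, itd_cmul deg qc qs hfin hdeg,
      letter_coassoc deg qc qs hfin hdeg, ih]
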